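/- arXiv:2510.04556 — 2 statements merged into one kernel-verified Lean document; each statement's English description precedes it below -/
import Mathlib

section
/- Let Y be a non-negative real-valued random variable with continuous cumulative distribution function F_Y and 0 < E[Y] < ∞. Then the area under the best-possible cumulative accuracy profile satisfies ∫_0^1 CAP_{Y,Y}(alpha) d alpha − 1/2 = (1/E[Y]) E[ Y · F_Y(Y) ] − 1/2. -/
open MeasureTheory ProbabilityTheory

/-- The cumulative distribution function of a measure on `ℝ`. -/
noncomputable def cdfOf (μ : Measure ℝ) (y : ℝ) : ℝ := (μ (Set.Iic y)).toReal

/-- The left-continuous generalized inverse of a CDF: `F⁻¹(p) = inf {t | p ≤ F t}`. -/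
noncomputable def leftContInv (F : ℝ → ℝ) (p : ℝ) : ℝ := sInf {t : ℝ | p ≤ F t}

/-! For `α ∈ (0,1)` and a continuous CDF `F`, the events `{F⁻¹(1-α) < Y}` and `{1-α < F(Y)}`
differ only inside the level set `{F(Y) = 1-α}`, which is `ℙ`-null for all but countably many `α`.
After this replacement, Fubini turns the `α`-integral into
`E[Y · Leb{α ∈ (0,1) | 1-α < F(Y)}] = E[Y · F(Y)]`. -/

open Set Filter Topology

section LeftContInv

variable {F : ℝ → ℝ} {p y : ℝ}

theorem leftContInv_le_iff (hmono : Monotone F) (hcont : Continuous F)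
    (hbdd : BddBelow {t | p ≤ F t}) (hne : {t | p ≤ F t}.Nonempty) :
    leftContInv F p ≤ y ↔ p ≤ F y := by
  refine ⟨fun h => ?_, fun h => csInf_le hbdd h⟩
  have hmem : p ≤ F (leftContInv F p) :=
    (isClosed_le continuous_const hcont).csInf_mem hne hbdd
  exact hmem.trans (hmono h)

theorem leftContInv_lt_iff_of_ne (hmono : Monotone F) (hcont : Continuous F)
    (hbdd : BddBelow {t | p ≤ F t}) (hne : {t | p ≤ F t}.Nonempty) (hpy : p ≠ F y) :
    leftContInv F p < y ↔ p < F y := by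
  refine ⟨fun h => lt_of_le_of_ne ((leftContInv_le_iff hmono hcont hbdd hne).1 h.le) hpy,
    fun h => ?_⟩
  obtain ⟨t, hpt, hty⟩ := ((hcont.continuousAt.eventually_const_lt h).filter_mono
    nhdsWithin_le_nhds |>.and (self_mem_nhdsWithin : Iio y ∈ 𝓝[<] y)).exists
  exact ((leftContInv_le_iff hmono hcont hbdd hne).2 hpt.le).trans_lt hty

end LeftContInv

theorem cdfOf_eq_cdf (μ : Measure ℝ) [IsProbabilityMeasure μ] : cdfOf μ = cdf μ :=
  funext fun y => (cdf_eq_real μ y).symm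

namespace ProbabilityTheory

variable (μ : Measure ℝ) {p y : ℝ}

theorem bddBelow_setOf_le_cdf (hp : 0 < p) : BddBelow {t | p ≤ cdf μ t} := by
  obtain ⟨y₀, hy₀⟩ := ((tendsto_cdf_atBot μ).eventually_lt_const hp).exists_forall_of_atBot
  exact ⟨y₀, fun t ht => le_of_not_gt fun hty => (hy₀ t hty.le).not_ge ht⟩

theorem nonempty_setOf_le_cdf (hp : p < 1) : {t | p ≤ cdf μ t}.Nonempty :=
  (((tendsto_cdf_atTop μ).eventually_const_lt hp).exists).imp fun _ => le_of_lt

theorem leftContInv_cdf_lt_iff_of_ne {μ} (hcont : Continuous (cdf μ)) (hp₀ : 0 < p) (hp₁ : p < 1)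
    (hpy : p ≠ cdf μ y) : leftContInv (cdf μ) p < y ↔ p < cdf μ y :=
  leftContInv_lt_iff_of_ne (monotone_cdf μ) hcont (bddBelow_setOf_le_cdf μ hp₀)
    (nonempty_setOf_le_cdf μ hp₁) hpy

end ProbabilityTheory

namespace MeasureTheory

variable {Ω β : Type*} [MeasurableSpace Ω] {μ : Measure Ω} [SFinite μ]

theorem ae_measure_level_set_eq_zero [MeasurableSpace β] [MeasurableSingletonClass β]
    {g : Ω → β} (hg : Measurable g) (ν : Measure β) [NullSingletonClass ν] :
    ∀ᵐ t ∂ν, μ {ω | g ω = t} = 0 := by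
  have := (Measure.countable_meas_level_set_pos (μ := μ) hg).measure_zero ν
  rw [ae_iff]
  simpa [pos_iff_ne_zero] using this

theorem integral_Ioo_setIntegral_one_sub_lt {f g : Ω → ℝ} (hf : Integrable f μ) (hg : Measurable g)
    (hg₀ : ∀ ω, 0 ≤ g ω) (hg₁ : ∀ ω, g ω ≤ 1) :
    ∫ α in Ioo (0 : ℝ) 1, ∫ ω in {ω | 1 - α < g ω}, f ω ∂μ = ∫ ω, f ω * g ω ∂μ := by
  have hint : Integrable (Function.uncurry fun α ω => {ω | 1 - α < g ω}.indicator f ω)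
      ((volume.restrict (Ioo (0 : ℝ) 1)).prod μ) := by
    have huncurry : (Function.uncurry fun α ω => {ω | 1 - α < g ω}.indicator f ω)
        = {z : ℝ × Ω | 1 - z.1 < g z.2}.indicator (fun z => f z.2) := by
      ext z; simp only [Function.uncurry, indicator_apply, mem_ofPred_eq]
    rw [huncurry]
    exact (hf.comp_snd _).indicator
      (measurableSet_lt (measurable_const.sub measurable_fst) (hg.comp measurable_snd))
  have hsection (α : ℝ) (ω : Ω) :
      {ω | 1 - α < g ω}.indicator f ω = (Ioi (1 - g ω)).indicator (fun _ => f ω) α := by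
    simp only [indicator_apply, mem_ofPred_eq, mem_Ioi, sub_lt_comm]
  simp_rw [← integral_indicator (measurableSet_lt measurable_const hg)]
  rw [integral_integral_swap hint]
  refine integral_congr_ae (Eventually.of_forall fun ω => ?_)
  simp_rw [hsection]
  rw [integral_indicator_const _ measurableSet_Ioi,
    measureReal_restrict_apply measurableSet_Ioi, Ioi_inter_Ioo, max_eq_left (by linarith [hg₁ ω]),
    Real.volume_real_Ioo_of_le (by linarith [hg₀ ω]), sub_sub_cancel, smul_eq_mul, mul_comm]

end MeasureTheory

theorem area_under_best_CAP_general
    {Ω : Type*} [MeasureSpace Ω] [IsProbabilityMeasure (ℙ : Measure Ω)]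
    (Y : Ω → ℝ) (hYmeas : Measurable Y)
    (hYint : Integrable Y ℙ)
    (hcont : Continuous (cdfOf (Measure.map Y ℙ))) :
    (∫ α in Set.Ioo (0 : ℝ) 1,
        (∫ ω in {ω | leftContInv (cdfOf (Measure.map Y ℙ)) (1 - α) < Y ω}, Y ω ∂ℙ)
          / (∫ ω, Y ω ∂ℙ)) - 1 / 2
      = (∫ ω, Y ω * cdfOf (Measure.map Y ℙ) (Y ω) ∂ℙ) / (∫ ω, Y ω ∂ℙ) - 1 / 2 := by
  have : IsProbabilityMeasure (Measure.map Y ℙ) :=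
    Measure.isProbabilityMeasure_map hYmeas.aemeasurable
  rw [cdfOf_eq_cdf] at hcont ⊢
  set F := cdf (Measure.map Y ℙ)
  have hFY : Measurable fun ω => F (Y ω) := hcont.measurable.comp hYmeas
  have hsets : ∀ᵐ α ∂volume.restrict (Ioo (0 : ℝ) 1),
      ∫ ω in {ω | leftContInv F (1 - α) < Y ω}, Y ω = ∫ ω in {ω | 1 - α < F (Y ω)}, Y ω := by
    filter_upwards [ae_restrict_of_ae
        (ae_measure_level_set_eq_zero (μ := ℙ) (measurable_const.sub hFY) volume),
      ae_restrict_mem measurableSet_Ioo] with α hnull hα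
    refine setIntegral_congr_set (eventuallyEq_set.2 ?_)
    filter_upwards [measure_eq_zero_iff_ae_notMem.1 hnull] with ω hω
    exact leftContInv_cdf_lt_iff_of_ne hcont (by linarith [hα.2]) (by linarith [hα.1])
      fun h => hω (by show 1 - F (Y ω) = α; linarith)
  rw [integral_div, integral_congr_ae hsets, integral_Ioo_setIntegral_one_sub_lt hYint hFY
    (fun _ => cdf_nonneg _ _) (fun _ => cdf_le_one _ _)]

/-- **Area under the best-possible CAP curve.**
Let `Y` be a non-negative real-valued random variable with continuous CDF `F_Y` and
`0 < E[Y] < ∞`. Then `∫_0^1 CAP_{Y,Y}(α) dα − 1/2 = (1/E[Y]) E[Y · F_Y(Y)] − 1/2`,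
where `CAP_{Y,Y}(α) = (1/E[Y]) E[Y · 1{Y > F_Y⁻¹(1−α)}]`. -/
theorem area_under_best_CAP
    {Ω : Type*} [MeasureSpace Ω] [IsProbabilityMeasure (ℙ : Measure Ω)]
    (Y : Ω → ℝ) (hYmeas : Measurable Y) (hYnn : ∀ ω, 0 ≤ Y ω)
    (hYint : Integrable Y ℙ) (hEY : 0 < ∫ ω, Y ω ∂ℙ)
    (hcont : Continuous (cdfOf (Measure.map Y ℙ))) :
    (∫ α in Set.Ioo (0 : ℝ) 1,
        (∫ ω in {ω | leftContInv (cdfOf (Measure.map Y ℙ)) (1 - α) < Y ω}, Y ω ∂ℙ)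
          / (∫ ω, Y ω ∂ℙ)) - 1 / 2
      = (∫ ω, Y ω * cdfOf (Measure.map Y ℙ) (Y ω) ∂ℙ) / (∫ ω, Y ω ∂ℙ) - 1 / 2 :=
  area_under_best_CAP_general Y hYmeas hYint hcont
end

section
/- Let Y be a non-negative, non-degenerate real-valued random variable with continuous cumulative distribution function F_Y and 0 < E[Y] < ∞. Then the denominator of the Gini index is strictly positive: 2 E[ Y · F_Y(Y) ] − E[ Y ] > 0; equivalently, ∫_0^1 CAP_{Y,Y}(alpha) d alpha − 1/2 > 0. -/
open MeasureTheory ProbabilityTheory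

open Set Filter

/-!
Let `F` be the (continuous) cdf and `c` a median, `F c = 1/2`. The function
`(y - c) * (F y - 1/2)` is nonnegative, and its integral is `E[Y F(Y)] - E[Y]/2` because
`E[F(Y)] = 1/2`: for an independent copy `Y'`, `P(Y' ≤ Y) = P(Y < Y')` and ties are null.
It vanishes only on the level set `{F = 1/2}`, a compact interval on which `F` is constant,
hence a null set; so the integral is strictly positive.
-/

lemma lintegral_measure_Ioi_eq_lintegral_measure_Iio (μ ν : Measure ℝ) [SFinite μ] [SFinite ν] :
    ∫⁻ x, ν (Ioi x) ∂μ = ∫⁻ y, μ (Iio y) ∂ν := by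
  have hs : MeasurableSet {p : ℝ × ℝ | p.1 < p.2} := measurableSet_lt measurable_fst measurable_snd
  exact (Measure.prod_apply hs).symm.trans (Measure.prod_apply_symm hs)

namespace ProbabilityTheory

variable {μ : Measure ℝ}

lemma exists_cdf_eq (hcont : Continuous (cdf μ)) {r : ℝ} (h0 : 0 < r) (h1 : r < 1) :
    ∃ c, cdf μ c = r :=
  intermediate_value_univ₂_eventually₂ hcont continuous_const
    (((tendsto_cdf_atBot μ).eventually_lt_const h0).mono fun _ hx => hx.le)
    (((tendsto_cdf_atTop μ).eventually_const_lt h1).mono fun _ hx => hx.le)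

lemma norm_cdf_le_one (x : ℝ) : ‖cdf μ x‖ ≤ 1 := by
  rw [Real.norm_of_nonneg (cdf_nonneg μ x)]
  exact cdf_le_one μ x

lemma integrable_cdf [IsFiniteMeasure μ] : Integrable (cdf μ) μ :=
  (integrable_const (1 : ℝ)).mono' (monotone_cdf μ).measurable.aestronglyMeasurable
    (.of_forall norm_cdf_le_one)

lemma integrable_mul_cdf (hint : Integrable (fun x => x) μ) :
    Integrable (fun x => x * cdf μ x) μ :=
  hint.mul_bdd (monotone_cdf μ).measurable.aestronglyMeasurable (.of_forall norm_cdf_le_one)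

variable [IsProbabilityMeasure μ]

lemma cdfOf_eq_cdf : cdfOf μ = cdf μ := by
  funext x; rw [cdfOf, cdf_eq_real, measureReal_def]

lemma nullSingletonClass_of_continuous_cdf (hcont : Continuous (cdf μ)) :
    NullSingletonClass μ where
  measure_singleton a := by
    rw [← measure_cdf μ, StieltjesFunction.measure_singleton,
      hcont.continuousWithinAt.leftLim_eq, sub_self, ENNReal.ofReal_zero]

lemma lintegral_measure_Iic_eq_half [NullSingletonClass μ] : ∫⁻ x, μ (Iic x) ∂μ = 2⁻¹ := by
  have hmeas : Measurable fun x => μ (Iic x) :=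
    Monotone.measurable fun _ _ h => measure_mono (Iic_subset_Iic.mpr h)
  have hsum : ∫⁻ x, μ (Iic x) ∂μ + ∫⁻ x, μ (Ioi x) ∂μ = 1 := by
    rw [← lintegral_add_left hmeas]
    simp_rw [← measure_union (Iic_disjoint_Ioi le_rfl) measurableSet_Ioi, Iic_union_Ioi,
      measure_univ, lintegral_const, measure_univ, one_mul]
  rw [lintegral_measure_Ioi_eq_lintegral_measure_Iio] at hsum
  simp_rw [measure_congr Iio_ae_eq_Iic] at hsum
  rw [← two_mul] at hsum
  exact ENNReal.eq_inv_of_mul_eq_one_left (by rwa [mul_comm] at hsum)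

lemma integral_cdf_eq_half [NullSingletonClass μ] : ∫ x, cdf μ x ∂μ = 1 / 2 := by
  rw [integral_eq_lintegral_of_nonneg_ae (.of_forall (cdf_nonneg μ))
    (monotone_cdf μ).measurable.aestronglyMeasurable]
  simp_rw [ofReal_cdf, lintegral_measure_Iic_eq_half]
  norm_num

lemma measure_Icc_eq_zero_of_cdf_eq [NullSingletonClass μ] {a b : ℝ} (h : cdf μ a = cdf μ b) :
    μ (Icc a b) = 0 := by
  rw [← measure_congr Ioc_ae_eq_Icc, ← measure_cdf μ, StieltjesFunction.measure_Ioc, h, sub_self,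
    ENNReal.ofReal_zero]

lemma measure_setOf_cdf_eq_eq_zero (hcont : Continuous (cdf μ)) {r : ℝ} (h0 : 0 < r) (h1 : r < 1) :
    μ {x | cdf μ x = r} = 0 := by
  have := nullSingletonClass_of_continuous_cdf hcont
  set S := {x | cdf μ x = r}
  rcases S.eq_empty_or_nonempty with hS | hS
  · rw [hS, measure_empty]
  have hclosed : IsClosed S := isClosed_eq hcont continuous_const
  obtain ⟨b, hb⟩ := eventually_atTop.mp ((tendsto_cdf_atTop μ).eventually_const_lt h1)
  obtain ⟨a, ha⟩ := eventually_atBot.mp ((tendsto_cdf_atBot μ).eventually_lt_const h0)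
  have hbddAbove : BddAbove S := ⟨b, fun x hx => le_of_not_ge fun hbx => (hb x hbx).ne' hx⟩
  have hbddBelow : BddBelow S := ⟨a, fun x hx => le_of_not_ge fun hxa => (ha x hxa).ne hx⟩
  have hsub : S ⊆ Icc (sInf S) (sSup S) := fun x hx =>
    ⟨csInf_le hbddBelow hx, le_csSup hbddAbove hx⟩
  refine measure_mono_null hsub (measure_Icc_eq_zero_of_cdf_eq ?_)
  rw [hclosed.csInf_mem hS hbddBelow, hclosed.csSup_mem hS hbddAbove]

lemma integral_sub_mul_cdf_sub_pos (hcont : Continuous (cdf μ))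
    (hint : Integrable (fun x => x) μ) {c : ℝ} (hc : cdf μ c = 1 / 2) :
    0 < ∫ x, (x - c) * (cdf μ x - 1 / 2) ∂μ := by
  set g := fun x => (x - c) * (cdf μ x - 1 / 2)
  have hg_nonneg : 0 ≤ g := fun x => by
    rcases le_total x c with hx | hx
    · exact mul_nonneg_of_nonpos_of_nonpos (sub_nonpos.mpr hx)
        (sub_nonpos.mpr (hc ▸ monotone_cdf μ hx))
    · exact mul_nonneg (sub_nonneg.mpr hx) (sub_nonneg.mpr (hc ▸ monotone_cdf μ hx))
  have hg_int : Integrable g μ :=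
    (hint.sub (integrable_const c)).mul_bdd (c := 1)
      ((monotone_cdf μ).measurable.sub_const _).aestronglyMeasurable
      (.of_forall fun x => abs_le.mpr ⟨by linarith [cdf_nonneg μ x], by linarith [cdf_le_one μ x]⟩)
  have hzero : (Function.support g)ᶜ ⊆ {x | cdf μ x = 1 / 2} := fun x hx => by
    rcases mul_eq_zero.mp (Function.notMem_support.mp hx) with h | h
    · exact (sub_eq_zero.mp h) ▸ hc
    · exact sub_eq_zero.mp h
  rw [integral_pos_iff_support_of_nonneg hg_nonneg hg_int]
  refine pos_iff_ne_zero.mpr fun hsupp => ?_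
  have huniv := measure_union_null hsupp
    (measure_mono_null hzero (measure_setOf_cdf_eq_eq_zero hcont (by norm_num) (by norm_num)))
  rw [union_compl_self, measure_univ] at huniv
  exact one_ne_zero huniv

lemma integral_lt_two_mul_integral_mul_cdf (hcont : Continuous (cdf μ))
    (hint : Integrable (fun x => x) μ) :
    ∫ x, x ∂μ < 2 * ∫ x, x * cdf μ x ∂μ := by
  have := nullSingletonClass_of_continuous_cdf hcont
  obtain ⟨c, hc⟩ := exists_cdf_eq hcont (r := 1 / 2) (by norm_num) (by norm_num)
  have hmul := integrable_mul_cdf hint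
  have h₁ : Integrable (fun x => x * cdf μ x - 1 / 2 * x) μ := hmul.sub (hint.const_mul _)
  have h₂ : Integrable (fun x => c * (cdf μ x - 1 / 2)) μ :=
    (integrable_cdf.sub (integrable_const _)).const_mul _
  have hexpand : ∫ x, (x - c) * (cdf μ x - 1 / 2) ∂μ
      = ∫ x, x * cdf μ x ∂μ - 1 / 2 * ∫ x, x ∂μ := calc
    _ = ∫ x, ((x * cdf μ x - 1 / 2 * x) - c * (cdf μ x - 1 / 2)) ∂μ := by
      congr 1 with x; ring
    _ = ∫ x, x * cdf μ x ∂μ - 1 / 2 * ∫ x, x ∂μ - c * (∫ x, cdf μ x ∂μ - 1 / 2) := by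
      rw [integral_sub h₁ h₂, integral_sub hmul (hint.const_mul _), integral_const_mul,
        integral_const_mul, integral_sub integrable_cdf (integrable_const _), integral_const,
        probReal_univ, one_smul]
    _ = _ := by rw [integral_cdf_eq_half, sub_self, mul_zero, sub_zero]
  linarith [integral_sub_mul_cdf_sub_pos hcont hint hc]

end ProbabilityTheory

theorem gini_denominator_pos_general
    {Ω : Type*} [MeasureSpace Ω] [IsProbabilityMeasure (ℙ : Measure Ω)]
    (Y : Ω → ℝ) (hYint : Integrable Y ℙ)
    (hcont : Continuous (cdfOf (Measure.map Y ℙ))) :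
    0 < 2 * (∫ ω, Y ω * cdfOf (Measure.map Y ℙ) (Y ω) ∂ℙ) - ∫ ω, Y ω ∂ℙ := by
  set μ := Measure.map Y ℙ
  have hY := hYint.aemeasurable
  have : IsProbabilityMeasure μ := Measure.isProbabilityMeasure_map hY
  rw [cdfOf_eq_cdf] at hcont ⊢
  have hint : Integrable (fun x => x) μ :=
    (integrable_map_measure aestronglyMeasurable_id hY).mpr hYint
  have hmean : ∫ x, x ∂μ = ∫ ω, Y ω ∂ℙ := integral_map hY aestronglyMeasurable_id
  have hmul : ∫ x, x * cdf μ x ∂μ = ∫ ω, Y ω * cdf μ (Y ω) ∂ℙ :=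
    integral_map hY (continuous_id.mul hcont).aestronglyMeasurable
  linarith [integral_lt_two_mul_integral_mul_cdf hcont hint]

/-- **Strict positivity of the Gini denominator.**
Let `Y` be a non-negative, non-degenerate real-valued random variable with continuous CDF
`F_Y` and `0 < E[Y] < ∞`. Then `2 E[Y · F_Y(Y)] − E[Y] > 0`. -/
theorem gini_denominator_pos
    {Ω : Type*} [MeasureSpace Ω] [IsProbabilityMeasure (ℙ : Measure Ω)]
    (Y : Ω → ℝ) (hYmeas : Measurable Y) (hYnn : ∀ ω, 0 ≤ Y ω)
    (hYint : Integrable Y ℙ) (hEY : 0 < ∫ ω, Y ω ∂ℙ)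
    (hcont : Continuous (cdfOf (Measure.map Y ℙ)))
    (hnondeg : ¬ ∃ c : ℝ, Y =ᵐ[ℙ] fun _ => c) :
    0 < 2 * (∫ ω, Y ω * cdfOf (Measure.map Y ℙ) (Y ω) ∂ℙ) - ∫ ω, Y ω ∂ℙ :=
  gini_denominator_pos_general Y hYint hcont
end
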